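/- (All-or-nothing property.) Let I be a school matching instance and ρ,ρ'∈R(I) with ρ≠ρ'. Then ρ_+∩ρ'_+ = ∅ and ρ_−∩ρ'_− = ∅. -/

import Mathlib

open Classical
open scoped ENNReal

noncomputable section

namespace SM

/-- A school matching instance: students `A`, schools `B`, strict preference
orders over the other side plus the outside option `∅` (encoded as `none`),
and quotas `q b ≤ |A|`. -/
structure SchoolInstance (A B : Type) [Fintype A] [Fintype B] where
  prefA : A → Option B → Option B → Prop
  prefB : B → Option A → Option A → Prop
  prefA_sto : ∀ a, IsStrictTotalOrder (Option B) (prefA a)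
  prefB_sto : ∀ b, IsStrictTotalOrder (Option A) (prefB b)
  q : B → ℕ
  q_le : ∀ b, q b ≤ Fintype.card A

variable {A B : Type} [Fintype A] [Fintype B] [DecidableEq A] [DecidableEq B]

/-- A matching: every student is assigned a school or the outside option, and
each school receives at most `q b` students.  (A school is implicitly paired
with the outside option exactly when it has strictly fewer than `q b`
students, and a student is paired with the outside option exactly when it has
no school; this determines the set of pairs of the matching.) -/
structure Matching {A B : Type} [Fintype A] [Fintype B] (I : SchoolInstance A B) where
  toFun : A → Option B
  quota : ∀ b : B, (Finset.univ.filter fun a => toFun a = some b).card ≤ I.q b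

instance (I : SchoolInstance A B) : Nonempty (Matching I) := by
  refine ⟨⟨fun _ => none, fun b => ?_⟩⟩
  have h : (Finset.univ.filter fun _ : A => (none : Option B) = some b) = ∅ :=
    Finset.filter_false_of_mem (by intro a _; simp)
  rw [h, Finset.card_empty]
  exact Nat.zero_le _

/-- The students assigned to school `b`. -/
def assignedTo (I : SchoolInstance A B) (M : Matching I) (b : B) : Finset A :=
  Finset.univ.filter fun a => M.toFun a = some b

/-- School `b` has strictly fewer than `q b` students, i.e. is also paired
with the outside option. -/
def hasSlack (I : SchoolInstance A B) (M : Matching I) (b : B) : Prop :=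
  (assignedTo I M b).card < I.q b

/-- `x ∈ M(b)`: the partners of school `b` (students assigned to it, plus the
outside option when it is under quota). -/
def inPartners (I : SchoolInstance A B) (M : Matching I) (b : B) (x : Option A) : Prop :=
  (∃ a : A, x = some a ∧ M.toFun a = some b) ∨ (x = none ∧ hasSlack I M b)

/-- `M(b)` as a set. -/
def partnersSet (I : SchoolInstance A B) (M : Matching I) (b : B) : Set (Option A) :=
  {x | inPartners I M b x}

/-- The pair `ab` blocks `M`. -/
def BlocksPair (I : SchoolInstance A B) (M : Matching I) (a : A) (b : B) : Prop :=
  I.prefA a (some b) (M.toFun a) ∧ ∃ x, inPartners I M b x ∧ I.prefB b (some a) x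

/-- Student `a` blocks `M` (prefers the outside option to its partner). -/
def BlocksStudent (I : SchoolInstance A B) (M : Matching I) (a : A) : Prop :=
  I.prefA a none (M.toFun a)

/-- School `b` blocks `M` (prefers the outside option to one of its partners). -/
def BlocksSchool (I : SchoolInstance A B) (M : Matching I) (b : B) : Prop :=
  ∃ a : A, M.toFun a = some b ∧ I.prefB b none (some a)

/-- Stability: no blocking pair and no blocking agent. -/
def Stable (I : SchoolInstance A B) (M : Matching I) : Prop :=
  (¬ ∃ a b, BlocksPair I M a b) ∧ (¬ ∃ a, BlocksStudent I M a) ∧ (¬ ∃ b, BlocksSchool I M b)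

/-- `M ≥ M'`: every student weakly prefers `M` to `M'`. -/
def matGE (I : SchoolInstance A B) (M M' : Matching I) : Prop :=
  ∀ a : A, M.toFun a = M'.toFun a ∨ I.prefA a (M.toFun a) (M'.toFun a)

/-- `M' < M` in the student order. -/
def matLT (I : SchoolInstance A B) (M' M : Matching I) : Prop :=
  matGE I M M' ∧ M'.toFun ≠ M.toFun

/-- `M'` is an immediate predecessor of `M` in `(S(I), ≥)`. -/
def ImmPred (I : SchoolInstance A B) (M' M : Matching I) : Prop :=
  Stable I M' ∧ Stable I M ∧ matLT I M' M ∧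
    ¬ ∃ M'' : Matching I, Stable I M'' ∧ matLT I M' M'' ∧ matLT I M'' M

/-- The type in which rotations live: pairs `(ρ₊, ρ₋)` of sets of
student/school pairs (with the outside option allowed on either side). -/
abbrev Rot (A B : Type) : Type :=
  Finset (Option A × Option B) × Finset (Option A × Option B)

/-- The set of pairs of a matching: each student with its partner, and each
under-quota school with the outside option. -/
def pairsOf (I : SchoolInstance A B) (M : Matching I) : Finset (Option A × Option B) :=
  Finset.univ.filter fun p =>
    (∃ a : A, p = (some a, M.toFun a)) ∨ (∃ b : B, hasSlack I M b ∧ p = (none, some b))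

/-- The rotation `ρ(M, M') = (M ∖ M', M' ∖ M)`. -/
def rho (I : SchoolInstance A B) (M M' : Matching I) : Rot A B :=
  (pairsOf I M \ pairsOf I M', pairsOf I M' \ pairsOf I M)

/-- `R(I)`: the set of all rotations of `I`. -/
def RotSet (I : SchoolInstance A B) : Set (Rot A B) :=
  {r | ∃ M M' : Matching I, ImmPred I M' M ∧ r = rho I M M'}

/-- `c` is a maximal chain of stable matchings from `M0` down to `M`:
consecutive entries are immediate predecessors. -/
def chainTo (I : SchoolInstance A B) (M0 M : Matching I) (c : List (Matching I)) : Prop :=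
  c.head? = some M0 ∧ c.getLast? = some M ∧ (∀ N ∈ c, Stable I N) ∧
    List.Chain' (fun X Y => ImmPred I Y X) c

/-- The set of rotations eliminated along the chain `c`. -/
def chainRots (I : SchoolInstance A B) (c : List (Matching I)) : Set (Rot A B) :=
  {r | ∃ (i : ℕ) (X Y : Matching I), getElem? c i = some X ∧ getElem? c (i + 1) = some Y ∧ r = rho I X Y}

/-- `ρ` is exposed in `M`. -/
def Exposed (I : SchoolInstance A B) (r : Rot A B) (M : Matching I) : Prop :=
  ∃ M', ImmPred I M' M ∧ r = rho I M M'

/-- The rotation poset `ρ ⊵ ρ'` (relative to the rotation-set map `RM`):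
either `ρ = ρ'`, or `ρ ∈ R_M` for every stable `M` in which `ρ'` is exposed. -/
def domRel (I : SchoolInstance A B) (RM : Matching I → Set (Rot A B)) (r r' : Rot A B) : Prop :=
  r = r' ∨ ∀ M, Stable I M → Exposed I r' M → r ∈ RM M

/-- `ρ ▷ ρ'`. -/
def strictDom (I : SchoolInstance A B) (RM : Matching I → Set (Rot A B)) (r r' : Rot A B) : Prop :=
  domRel I RM r r' ∧ r ≠ r'

/-- `R ⊆ R(I)` is upper-closed in the rotation poset. -/
def UpperClosed (I : SchoolInstance A B) (RM : Matching I → Set (Rot A B))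
    (R : Set (Rot A B)) : Prop :=
  R ⊆ RotSet I ∧ ∀ r' ∈ R, ∀ r ∈ RotSet I, domRel I RM r r' → r ∈ R

/-- `N` is the join `M ∨ M'` (least upper bound) in `(S(I), ≥)`. -/
def IsJoin (I : SchoolInstance A B) (M M' N : Matching I) : Prop :=
  Stable I N ∧ matGE I N M ∧ matGE I N M' ∧
    ∀ P, Stable I P → matGE I P M → matGE I P M' → matGE I P N

/-- `N` is the meet `M ∧ M'` (greatest lower bound) in `(S(I), ≥)`. -/
def IsMeet (I : SchoolInstance A B) (M M' N : Matching I) : Prop :=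
  Stable I N ∧ matGE I M N ∧ matGE I M' N ∧
    ∀ P, Stable I P → matGE I M P → matGE I M' P → matGE I N P

/-- `F` is a (nonempty) sublattice of the lattice of stable matchings. -/
def IsSublattice (I : SchoolInstance A B) (F : Set (Matching I)) : Prop :=
  F.Nonempty ∧ (∀ M ∈ F, Stable I M) ∧
    (∀ M ∈ F, ∀ M' ∈ F, ∃ N ∈ F, IsJoin I M M' N) ∧
    (∀ M ∈ F, ∀ M' ∈ F, ∃ N ∈ F, IsMeet I M M' N)

/-- `ρ ~ ρ'`: the two rotations are eliminated together in every matching of `F`. -/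
def rotEquiv (I : SchoolInstance A B) (RM : Matching I → Set (Rot A B))
    (F : Set (Matching I)) (r r' : Rot A B) : Prop :=
  ∀ M ∈ F, (r ∈ RM M ↔ r' ∈ RM M)

/-- The trivial meta-rotation `θ₀^F` of rotations eliminated in every matching of `F`. -/
def theta0 (I : SchoolInstance A B) (RM : Matching I → Set (Rot A B))
    (F : Set (Matching I)) : Set (Rot A B) :=
  {r | r ∈ RotSet I ∧ ∀ M ∈ F, r ∈ RM M}

/-- The trivial meta-rotation `θ_z^F` of rotations eliminated in no matching of `F`. -/
def thetaZ (I : SchoolInstance A B) (RM : Matching I → Set (Rot A B))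
    (F : Set (Matching I)) : Set (Rot A B) :=
  {r | r ∈ RotSet I ∧ ∀ M ∈ F, r ∉ RM M}

/-- `θ` is a meta-rotation of `F` (an equivalence class of `~`). -/
def IsMetaRot (I : SchoolInstance A B) (RM : Matching I → Set (Rot A B))
    (F : Set (Matching I)) (θ : Set (Rot A B)) : Prop :=
  ∃ r ∈ RotSet I, θ = {r' | r' ∈ RotSet I ∧ rotEquiv I RM F r r'}

/-- `θ` is a proper meta-rotation of `F`. -/
def IsProperMeta (I : SchoolInstance A B) (RM : Matching I → Set (Rot A B))
    (F : Set (Matching I)) (θ : Set (Rot A B)) : Prop :=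
  IsMetaRot I RM F θ ∧ θ ≠ theta0 I RM F ∧ θ ≠ thetaZ I RM F

/-- `θ ⊵^F θ'` on (proper) meta-rotations. -/
def metaDom (I : SchoolInstance A B) (RM : Matching I → Set (Rot A B))
    (F : Set (Matching I)) (θ θ' : Set (Rot A B)) : Prop :=
  ∀ M ∈ F, θ' ⊆ RM M → θ ⊆ RM M

/-- `Θ_M`: the set of proper meta-rotations contained in `R_M`. -/
def ThetaM (I : SchoolInstance A B) (RM : Matching I → Set (Rot A B))
    (F : Set (Matching I)) (M : Matching I) : Set (Set (Rot A B)) :=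
  {θ | IsProperMeta I RM F θ ∧ θ ⊆ RM M}

/-- `Θ` is an upper-closed set of proper meta-rotations. -/
def UCProper (I : SchoolInstance A B) (RM : Matching I → Set (Rot A B))
    (F : Set (Matching I)) (Θ : Set (Set (Rot A B))) : Prop :=
  (∀ θ ∈ Θ, IsProperMeta I RM F θ) ∧
    ∀ θ' ∈ Θ, ∀ θ, IsProperMeta I RM F θ → metaDom I RM F θ θ' → θ ∈ Θ

/-- `M_R`: the stable matching whose rotation set is `R` (via definite description). -/
def MofR (I : SchoolInstance A B) (RM : Matching I → Set (Rot A B))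
    (R : Set (Rot A B)) : Matching I :=
  Classical.epsilon fun M => Stable I M ∧ RM M = R

/-- `R^θ = θ₀^F ∪ ⋃ {θ' proper : θ' ⊵^F θ}`. -/
def Rup (I : SchoolInstance A B) (RM : Matching I → Set (Rot A B))
    (F : Set (Matching I)) (θ : Set (Rot A B)) : Set (Rot A B) :=
  theta0 I RM F ∪ ⋃₀ {θ' | IsProperMeta I RM F θ' ∧ metaDom I RM F θ' θ}

/-- `R_θ = θ₀^F ∪ ⋃ {θ' proper : θ' ▷^F θ}`. -/
def Rdn (I : SchoolInstance A B) (RM : Matching I → Set (Rot A B))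
    (F : Set (Matching I)) (θ : Set (Rot A B)) : Set (Rot A B) :=
  theta0 I RM F ∪ ⋃₀ {θ' | IsProperMeta I RM F θ' ∧ metaDom I RM F θ' θ ∧ θ' ≠ θ}

/-- `M^θ`. -/
def Mup (I : SchoolInstance A B) (RM : Matching I → Set (Rot A B))
    (F : Set (Matching I)) (θ : Set (Rot A B)) : Matching I :=
  MofR I RM (Rup I RM F θ)

/-- `M_θ`. -/
def Mdn (I : SchoolInstance A B) (RM : Matching I → Set (Rot A B))
    (F : Set (Matching I)) (θ : Set (Rot A B)) : Matching I :=
  MofR I RM (Rdn I RM F θ)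

/-- The meet `M ∧ M'` in the lattice of stable matchings (via definite description). -/
def meetM (I : SchoolInstance A B) (M M' : Matching I) : Matching I :=
  Classical.epsilon fun N => IsMeet I M M' N

/-- First order differential `∂f_θ = f(M^θ) − f(M_θ)`. -/
def d1 (I : SchoolInstance A B) (RM : Matching I → Set (Rot A B))
    (F : Set (Matching I)) (f : Matching I → ℝ) (θ : Set (Rot A B)) : ℝ :=
  f (Mup I RM F θ) - f (Mdn I RM F θ)

/-- Second order differential
`∂²f_{θ,θ'} = f(M^θ ∧ M_{θ'}) + f(M_θ ∧ M^{θ'}) − f(M_θ ∧ M_{θ'}) − f(M^θ ∧ M^{θ'})`. -/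
def d2 (I : SchoolInstance A B) (RM : Matching I → Set (Rot A B))
    (F : Set (Matching I)) (f : Matching I → ℝ) (θ θ' : Set (Rot A B)) : ℝ :=
  f (meetM I (Mup I RM F θ) (Mdn I RM F θ')) + f (meetM I (Mdn I RM F θ) (Mup I RM F θ'))
    - f (meetM I (Mdn I RM F θ) (Mdn I RM F θ')) - f (meetM I (Mup I RM F θ) (Mup I RM F θ'))

/-- The greatest element `M₀^F` of `F` (via definite description). -/
def topF (I : SchoolInstance A B) (F : Set (Matching I)) : Matching I :=
  Classical.epsilon fun N => N ∈ F ∧ ∀ P ∈ F, matGE I N P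

/-- Vertices of the digraph: all rotations, plus a source `s` and sink `t`. -/
abbrev Vtx (A B : Type) : Type := Rot A B ⊕ Bool

/-- The source `s`. -/
def srcV : Vtx A B := Sum.inr true

/-- The sink `t`. -/
def tgtV : Vtx A B := Sum.inr false

/-- The value of the cut `S` for the capacity function `u`: the total capacity
of the arcs leaving `S`. -/
def cutVal (u : Vtx A B → Vtx A B → ℝ≥0∞) (S : Set (Vtx A B)) : ℝ≥0∞ :=
  ∑ p : Vtx A B × Vtx A B, if p.1 ∈ S ∧ p.2 ∉ S then u p.1 p.2 else 0

/-- The `s`-`t` cut `{s} ∪ R`. -/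
def cutOf (R : Set (Rot A B)) : Set (Vtx A B) := insert srcV (Sum.inl '' R)

/-- `(u, C)` witnesses minimum cut representability of `Π(f, F)`: for every
`R ⊆ R(I)`, the cut `{s} ∪ R` has finite capacity iff `R` is upper-closed and
`M_R ∈ F`, and in that case its value is `f(M_R) + C`. -/
def MinCutRepWith (I : SchoolInstance A B) (RM : Matching I → Set (Rot A B))
    (F : Set (Matching I)) (f : Matching I → ℝ)
    (u : Vtx A B → Vtx A B → ℝ≥0∞) (C : ℝ) : Prop :=
  ∀ R : Set (Rot A B), R ⊆ RotSet I →
    ((cutVal u (cutOf R) ≠ ⊤ ↔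
        (UpperClosed I RM R ∧ ∃ M, Stable I M ∧ RM M = R ∧ M ∈ F)) ∧
      (∀ M, Stable I M → RM M = R → M ∈ F → (cutVal u (cutOf R)).toReal = f M + C))

/-- The problem `Π(f, F)` is minimum cut representable. -/
def MinCutRep (I : SchoolInstance A B) (RM : Matching I → Set (Rot A B))
    (F : Set (Matching I)) (f : Matching I → ℝ) : Prop :=
  ∃ u C, MinCutRepWith I RM F f u C

/-- The cut digraph `D^{f,F}` (with representative rotations `rep` and
constant `γ`); capacities of parallel arcs are added. -/
def cutDigraph (I : SchoolInstance A B) (RM : Matching I → Set (Rot A B))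
    (F : Set (Matching I)) (f : Matching I → ℝ)
    (rep : Set (Rot A B) → Rot A B) (γ : ℝ) : Vtx A B → Vtx A B → ℝ≥0∞ :=
  fun x y =>
    (if ∃ θ, IsMetaRot I RM F θ ∧ ∃ r ∈ θ, ∃ r' ∈ θ, r ≠ r' ∧ x = Sum.inl r ∧ y = Sum.inl r'
      then ⊤ else 0)
    + (if ∃ θ θ', IsProperMeta I RM F θ ∧ IsProperMeta I RM F θ' ∧ θ ≠ θ' ∧
          metaDom I RM F θ' θ ∧ x = Sum.inl (rep θ) ∧ y = Sum.inl (rep θ')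
        then ⊤ else 0)
    + (∑ θ : Set (Rot A B), ∑ θ' : Set (Rot A B),
        if IsProperMeta I RM F θ ∧ IsProperMeta I RM F θ' ∧ θ ≠ θ' ∧
            x = Sum.inl (rep θ) ∧ y = Sum.inl (rep θ')
        then ENNReal.ofReal ((1 / 2) * d2 I RM F f θ θ') else 0)
    + (if (theta0 I RM F).Nonempty ∧ x = srcV ∧ y = Sum.inl (rep (theta0 I RM F))
        then ⊤ else 0)
    + (if (thetaZ I RM F).Nonempty ∧ x = Sum.inl (rep (thetaZ I RM F)) ∧ y = tgtV
        then ⊤ else 0)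
    + (∑ θ : Set (Rot A B),
        if IsProperMeta I RM F θ ∧ x = Sum.inl (rep θ) ∧ y = tgtV
        then ENNReal.ofReal (d1 I RM F f θ -
          (1 / 2) * (∑ θ' : Set (Rot A B),
            if IsProperMeta I RM F θ' ∧ θ' ≠ θ then d2 I RM F f θ θ' else 0) + γ)
        else 0)
    + (∑ θ : Set (Rot A B),
        if IsProperMeta I RM F θ ∧ x = srcV ∧ y = Sum.inl (rep θ)
        then ENNReal.ofReal γ else 0)

/-- `b` prefers `S'` to `S''`: every member of `S'` is preferred to every
member of `S'' ∖ S'`. -/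
def prefersSet (I : SchoolInstance A B) (b : B) (S' S'' : Set (Option A)) : Prop :=
  ∀ x ∈ S', ∀ y ∈ S'', y ∉ S' → I.prefB b x y

/-- `A(ρ)`: students appearing in `ρ₊`. -/
def Aof (r : Rot A B) : Set A := {a | ∃ b : B, (some a, some b) ∈ r.1}

/-- `B(ρ)`: schools appearing in `ρ₊`. -/
def Bof (r : Rot A B) : Set B := {b | ∃ a : A, (some a, some b) ∈ r.1}

/-- `ρ₊(b)`: students matched to `b` in `ρ₊`. -/
def rhoPlusB (r : Rot A B) (b : B) : Set A := {a | (some a, some b) ∈ r.1}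

/-- `R^ρ = {ρ' : ρ' ⊵ ρ}`. -/
def RupRot (I : SchoolInstance A B) (RM : Matching I → Set (Rot A B))
    (r : Rot A B) : Set (Rot A B) :=
  {r' | r' ∈ RotSet I ∧ domRel I RM r' r}

/-- `R_ρ = {ρ' : ρ' ▷ ρ}`. -/
def RdnRot (I : SchoolInstance A B) (RM : Matching I → Set (Rot A B))
    (r : Rot A B) : Set (Rot A B) :=
  {r' | r' ∈ RotSet I ∧ strictDom I RM r' r}

/-- `M^ρ`. -/
def MupRot (I : SchoolInstance A B) (RM : Matching I → Set (Rot A B))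
    (r : Rot A B) : Matching I :=
  MofR I RM (RupRot I RM r)

/-- `M_ρ`. -/
def MdnRot (I : SchoolInstance A B) (RM : Matching I → Set (Rot A B))
    (r : Rot A B) : Matching I :=
  MofR I RM (RdnRot I RM r)

/-- First order differential of `f` at a rotation: `∂f_ρ = f(M^ρ) − f(M_ρ)`. -/
def d1Rot (I : SchoolInstance A B) (RM : Matching I → Set (Rot A B))
    (f : Matching I → ℝ) (r : Rot A B) : ℝ :=
  f (MupRot I RM r) - f (MdnRot I RM r)

/-- Second order differential of `f` at a pair of distinct rotations. -/
def d2Rot (I : SchoolInstance A B) (RM : Matching I → Set (Rot A B))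
    (f : Matching I → ℝ) (r r' : Rot A B) : ℝ :=
  f (meetM I (MupRot I RM r) (MdnRot I RM r')) + f (meetM I (MdnRot I RM r) (MupRot I RM r'))
    - f (meetM I (MdnRot I RM r) (MdnRot I RM r'))
    - f (meetM I (MupRot I RM r) (MupRot I RM r'))

/-- The pair `(ρ_in, ρ_out)` characterizes the stable matchings assigning both
siblings `a, ā` to school `b`. -/
def siblingChar (I : SchoolInstance A B) (RM : Matching I → Set (Rot A B))
    (a abar : A) (b : B) (p : Rot A B × Rot A B) : Prop :=
  ∀ M : Matching I, Stable I M →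
    ((M.toFun a = some b ∧ M.toFun abar = some b) ↔ (p.1 ∈ RM M ∧ p.2 ∉ RM M))

/-- Some stable matching assigns both `a` and `ā` to `b`. -/
def goodSchool (I : SchoolInstance A B) (a abar : A) (b : B) : Prop :=
  ∃ M, Stable I M ∧ M.toFun a = some b ∧ M.toFun abar = some b

/-- The pair `(ρ_in(a,ā,b), ρ_out(a,ā,b))` (via definite description). -/
def siblingPair (I : SchoolInstance A B) (RM : Matching I → Set (Rot A B))
    (a abar : A) (b : B) : Rot A B × Rot A B :=
  Classical.epsilon fun p => p.1 ∈ RotSet I ∧ p.2 ∈ RotSet I ∧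
    siblingChar I RM a abar b p ∧ strictDom I RM p.1 p.2

/-- `R_in(a, ā)`. -/
def Rin (I : SchoolInstance A B) (RM : Matching I → Set (Rot A B))
    (a abar : A) : Set (Rot A B) :=
  {r | ∃ b, goodSchool I a abar b ∧ r = (siblingPair I RM a abar b).1}

/-- `R_out(a, ā)`. -/
def Rout (I : SchoolInstance A B) (RM : Matching I → Set (Rot A B))
    (a abar : A) : Set (Rot A B) :=
  {r | ∃ b, goodSchool I a abar b ∧ r = (siblingPair I RM a abar b).2}

/-- The indicator function: `0` when the siblings are matched to the same
school, `1` otherwise. -/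
def sibIndicator (I : SchoolInstance A B) (a abar : A) : Matching I → ℝ :=
  fun M => if M.toFun a = M.toFun abar then 0 else 1

end SM

/-!
Ordered by the students' preferences, the stable matchings form a distributive lattice under the
pointwise join and meet. The quotas survive because at every school the students who move between
two stable matchings all prefer the same one of them, which follows by counting, as in the rural
hospitals theorem. A rotation `ρ(M, M')` is a covering pair `M' ⋖ M` and only sees the students
who move. If `ρ(M, M')` and `ρ(N, N')` share a pair `(a, c)`, then at `a` the meet `K = M ⊓ N`
lies strictly above `M' ⊔ N'`. In a modular lattice this gives `K ⊔ M' = M` and `K ⊔ N' = N`, and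
makes `K ⊓ M'`, `K ⊓ N'` lower covers of `K` whose join stays below `M' ⊔ N'`, so they coincide.
Pointwise, `ρ(K ⊔ M', M') = ρ(K, K ⊓ M')`, hence `ρ(M, M') = ρ(N, N')`.
-/

section

variable {α : Type*} [Lattice α] {a b c : α}

theorem CovBy.sup_eq_of_le_of_not_le (h : b ⋖ c) (hac : a ≤ c) (hab : ¬ a ≤ b) :
    a ⊔ b = c :=
  (h.eq_or_eq le_sup_right (sup_le hac h.le)).resolve_left (right_lt_sup.2 hab).ne'

variable [IsLowerModularLattice α]

theorem CovBy.inf_covBy_of_le_of_not_le (h : b ⋖ c) (hac : a ≤ c) (hab : ¬ a ≤ b) :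
    a ⊓ b ⋖ a := by
  rw [inf_comm]
  exact inf_covBy_of_covBy_sup_left (by rwa [sup_comm, h.sup_eq_of_le_of_not_le hac hab])

theorem inf_inf_eq_of_covBy_of_not_inf_le_sup {m m' n n' : α} (hm : m' ⋖ m) (hn : n' ⋖ n)
    (h : ¬ m ⊓ n ≤ m' ⊔ n') : m ⊓ n ⊓ m' = m ⊓ n ⊓ n' := by
  by_contra hne
  have hm' := hm.inf_covBy_of_le_of_not_le inf_le_left fun h' => h (h'.trans le_sup_left)
  have hn' := hn.inf_covBy_of_le_of_not_le inf_le_right fun h' => h (h'.trans le_sup_right)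
  refine h ?_
  rw [← hm'.wcovBy.sup_eq hn'.wcovBy hne]
  exact sup_le_sup inf_le_right inf_le_right

end

theorem Finset.card_eq_card_filter_lt_add_card_filter_gt_add_card_filter_eq {ι : Type*}
    {α : ι → Type*} [∀ i, LinearOrder (α i)] (s : Finset ι) (u v : ∀ i, α i) :
    s.card = (s.filter fun i => u i < v i).card + (s.filter fun i => v i < u i).card +
      (s.filter fun i => u i = v i).card := by
  rw [Finset.card_filter, Finset.card_filter, Finset.card_filter, ← Finset.sum_add_distrib,
    ← Finset.sum_add_distrib, Finset.card_eq_sum_ones]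
  refine Finset.sum_congr rfl fun i _ => ?_
  rcases lt_trichotomy (u i) (v i) with h | h | h
  · simp [h, h.ne, h.not_gt]
  · simp [h]
  · simp [h, h.ne', h.not_gt]

namespace SM

variable {A B : Type} [Fintype A] [Fintype B]

instance (I : SchoolInstance A B) (a : A) : IsStrictTotalOrder (Option B) (I.prefA a) :=
  I.prefA_sto a

instance (I : SchoolInstance A B) (b : B) : IsStrictTotalOrder (Option A) (I.prefB b) :=
  I.prefB_sto b

/-- The options of student `a`, ordered by `a`'s preference: `x < y` unfolds to `I.prefA a y x`. -/
def Choice (_I : SchoolInstance A B) (_a : A) : Type := Option B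

instance (I : SchoolInstance A B) (a : A) : LinearOrder (Choice I a) :=
  linearOrderOfSTO (α := Option B) (Function.swap (I.prefA a))

variable {I : SchoolInstance A B}

def Matching.choices (M : Matching I) : (a : A) → Choice I a := M.toFun

theorem Matching.choices_injective : Function.Injective (Matching.choices (I := I)) := by
  rintro ⟨f, _⟩ ⟨g, _⟩ (rfl : f = g)
  rfl

theorem Matching.sup_eq_some_iff {M N : Matching I} {b : B}
    (h : ∀ a, N.choices a < M.choices a → M.toFun a ≠ some b ∧ N.toFun a ≠ some b)
    (a : A) :
    (M.choices a ⊔ N.choices a : Choice I a) = some b ↔ N.toFun a = some b := by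
  rcases le_or_gt (M.choices a) (N.choices a) with hle | hlt
  · rw [sup_of_le_right hle]; rfl
  · rw [sup_of_le_left hlt.le]; exact iff_of_false (h a hlt).1 (h a hlt).2

theorem Matching.inf_eq_some_iff {M N : Matching I} {b : B}
    (h : ∀ a, N.choices a < M.choices a → M.toFun a ≠ some b ∧ N.toFun a ≠ some b)
    (a : A) :
    (M.choices a ⊓ N.choices a : Choice I a) = some b ↔ M.toFun a = some b := by
  rcases le_or_gt (M.choices a) (N.choices a) with hle | hlt
  · rw [inf_of_le_left hle]; rfl
  · rw [inf_of_le_right hlt.le]; exact iff_of_false (h a hlt).2 (h a hlt).1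

variable [DecidableEq B]

theorem mem_assignedTo {M : Matching I} {b : B} {a : A} :
    a ∈ assignedTo I M b ↔ M.toFun a = some b := by
  simp [assignedTo]

theorem inPartners_some {M : Matching I} {b : B} {a : A} :
    inPartners I M b (some a) ↔ M.toFun a = some b := by
  simp [inPartners]

theorem inPartners_none {M : Matching I} {b : B} : inPartners I M b none ↔ hasSlack I M b := by
  simp [inPartners]

theorem inPartners_congr {M N : Matching I} {b : B} (h : assignedTo I M b = assignedTo I N b)
    {x : Option A} : inPartners I M b x ↔ inPartners I N b x := by
  simp only [inPartners, hasSlack, ← mem_assignedTo, h]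

namespace Stable

variable {M : Matching I} (hM : Stable I M)
include hM

theorem not_prefA_none (a : A) : ¬ I.prefA a none (M.toFun a) :=
  fun h => hM.2.1 ⟨a, h⟩

theorem prefB_some_none {a : A} {b : B} (h : M.toFun a = some b) :
    I.prefB b (some a) none := by
  rcases trichotomous_of (I.prefB b) (some a) none with h' | h' | h'
  · exact h'
  · cases h'
  · exact absurd ⟨b, a, h, h'⟩ hM.2.2

theorem prefB_of_prefA {a : A} {b : B} (h : I.prefA a (some b) (M.toFun a)) {x : Option A}
    (hx : inPartners I M b x) : I.prefB b x (some a) := by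
  rcases trichotomous_of (I.prefB b) x (some a) with h' | rfl | h'
  · exact h'
  · rw [inPartners_some.1 hx] at h
    exact absurd h (irrefl _)
  · exact absurd ⟨a, b, h, x, hx, h'⟩ hM.1

end Stable

theorem card_filter_none_add_sum_card_filter_assignedTo (Z : Matching I) (p : A → Prop)
    [DecidablePred p] :
    (Finset.univ.filter fun a => Z.toFun a = none ∧ p a).card +
      ∑ b, ((assignedTo I Z b).filter p).card = (Finset.univ.filter p).card := by
  rw [Finset.card_eq_sum_card_fiberwise (s := Finset.univ.filter p) (f := Z.toFun)
    (t := Finset.univ) (fun _ _ => Finset.mem_coe.2 (Finset.mem_univ _)), Fintype.sum_option]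
  congr 1
  · simp only [Finset.filter_filter, and_comm]
  · refine Finset.sum_congr rfl fun b _ => ?_
    simp only [assignedTo, Finset.filter_filter, and_comm]

theorem card_assignedTo_le (M : Matching I) (b : B) : (assignedTo I M b).card ≤ I.q b := by
  unfold assignedTo
  convert M.quota b

theorem filter_assignedTo_choices_eq (M N : Matching I) (b : B) :
    (assignedTo I M b).filter (fun a => M.choices a = N.choices a) =
      (assignedTo I N b).filter (fun a => M.choices a = N.choices a) := by
  ext a
  simp only [Finset.mem_filter, mem_assignedTo]
  refine and_congr_left fun h => ?_
  rw [show M.toFun a = N.toFun a from h]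

section

variable {M N : Matching I} (hM : Stable I M) (hN : Stable I N)
include hM hN

/-- `b` would have to prefer each of `a`, `a'` to the other. -/
theorem not_lt_of_lt_of_mem_assignedTo {b : B} {a a' : A} (ha : a ∈ assignedTo I M b)
    (ha' : a' ∈ assignedTo I N b) (h : N.choices a < M.choices a) :
    ¬ M.choices a' < N.choices a' := by
  rw [mem_assignedTo] at ha ha'
  intro h'
  have h₁ : I.prefB b (some a') (some a) :=
    hN.prefB_of_prefA (by rw [← ha]; exact h) (inPartners_some.2 ha')
  have h₂ : I.prefB b (some a) (some a') :=
    hM.prefB_of_prefA (by rw [← ha']; exact h') (inPartners_some.2 ha)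
  exact asymm h₁ h₂

theorem card_filter_assignedTo_lt_le (b : B) :
    ((assignedTo I M b).filter fun a => N.choices a < M.choices a).card ≤
      ((assignedTo I N b).filter fun a => N.choices a < M.choices a).card := by
  rcases Finset.eq_empty_or_nonempty
    ((assignedTo I M b).filter fun a => N.choices a < M.choices a) with h₀ | ⟨a₀, ha₀⟩
  · simp [h₀]
  rw [Finset.mem_filter] at ha₀
  have hfull : (assignedTo I N b).card = I.q b := by
    refine le_antisymm (card_assignedTo_le N b) (not_lt.1 fun hslack => ?_)
    have hpref : I.prefA a₀ (some b) (N.toFun a₀) := by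
      rw [← mem_assignedTo.1 ha₀.1]; exact ha₀.2
    exact asymm (hM.prefB_some_none (mem_assignedTo.1 ha₀.1))
      (hN.prefB_of_prefA hpref (inPartners_none.2 hslack))
  have hgain : ((assignedTo I N b).filter fun a => M.choices a < N.choices a) = ∅ :=
    Finset.filter_eq_empty_iff.2 fun a ha =>
      not_lt_of_lt_of_mem_assignedTo hM hN ha₀.1 ha ha₀.2
  have hM' := Finset.card_eq_card_filter_lt_add_card_filter_gt_add_card_filter_eq
    (assignedTo I M b) M.choices N.choices
  have hN' := Finset.card_eq_card_filter_lt_add_card_filter_gt_add_card_filter_eq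
    (assignedTo I N b) M.choices N.choices
  rw [hgain, Finset.card_empty, ← filter_assignedTo_choices_eq] at hN'
  have := card_assignedTo_le M b
  omega

theorem card_filter_assignedTo_lt_eq (b : B) :
    ((assignedTo I M b).filter fun a => N.choices a < M.choices a).card =
      ((assignedTo I N b).filter fun a => N.choices a < M.choices a).card := by
  have hle := card_filter_assignedTo_lt_le hM hN
  have hnone : (Finset.univ.filter fun a => M.toFun a = none ∧ N.choices a < M.choices a) = ∅ :=
    Finset.filter_eq_empty_iff.2 fun a _ ⟨h₀, h⟩ =>
      hN.not_prefA_none a (by rw [← h₀]; exact h)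
  have hM' := card_filter_none_add_sum_card_filter_assignedTo M
    (fun a => N.choices a < M.choices a)
  have hN' := card_filter_none_add_sum_card_filter_assignedTo N
    (fun a => N.choices a < M.choices a)
  rw [hnone, Finset.card_empty, zero_add] at hM'
  have hsum := le_antisymm (Finset.sum_le_sum (s := Finset.univ) fun b _ => hle b) (by omega)
  exact (Finset.sum_eq_sum_iff_of_le fun b _ => hle b).1 hsum b (Finset.mem_univ b)

/-- The rural hospitals theorem. -/
theorem card_assignedTo_eq (b : B) : (assignedTo I M b).card = (assignedTo I N b).card := by
  have h₁ := card_filter_assignedTo_lt_eq hM hN b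
  have h₂ := card_filter_assignedTo_lt_eq hN hM b
  rw [Finset.card_eq_card_filter_lt_add_card_filter_gt_add_card_filter_eq (assignedTo I M b)
      M.choices N.choices,
    Finset.card_eq_card_filter_lt_add_card_filter_gt_add_card_filter_eq (assignedTo I N b)
      M.choices N.choices,
    filter_assignedTo_choices_eq]
  omega

theorem hasSlack_iff (b : B) : hasSlack I M b ↔ hasSlack I N b := by
  rw [hasSlack, hasSlack, card_assignedTo_eq hM hN]

theorem forall_lt_ne_some_of_filter_eq_empty {b : B}
    (h : ((assignedTo I M b).filter fun a => N.choices a < M.choices a) = ∅) (a : A)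
    (ha : N.choices a < M.choices a) : M.toFun a ≠ some b ∧ N.toFun a ≠ some b := by
  have h' := card_filter_assignedTo_lt_eq hM hN b
  rw [h, Finset.card_empty, eq_comm, Finset.card_eq_zero, Finset.filter_eq_empty_iff] at h'
  rw [Finset.filter_eq_empty_iff] at h
  exact ⟨fun hb => h (mem_assignedTo.2 hb) ha, fun hb => h' (mem_assignedTo.2 hb) ha⟩

theorem forall_lt_ne_some_or_forall_gt_ne_some (b : B) :
    (∀ a, N.choices a < M.choices a → M.toFun a ≠ some b ∧ N.toFun a ≠ some b) ∨
      (∀ a, M.choices a < N.choices a → M.toFun a ≠ some b ∧ N.toFun a ≠ some b) := by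
  by_cases h : ((assignedTo I M b).filter fun a => N.choices a < M.choices a) = ∅
  · exact Or.inl (forall_lt_ne_some_of_filter_eq_empty hM hN h)
  obtain ⟨a₀, ha₀⟩ := Finset.nonempty_iff_ne_empty.2 h
  rw [Finset.mem_filter] at ha₀
  refine Or.inr fun a ha => (forall_lt_ne_some_of_filter_eq_empty hN hM ?_ a ha).symm
  exact Finset.filter_eq_empty_iff.2 fun a' ha' =>
    not_lt_of_lt_of_mem_assignedTo hM hN ha₀.1 ha' ha₀.2

end

def Matching.ofAgrees (M N : Matching I) (f : A → Option B)
    (hf : ∀ b, (∀ a, f a = some b ↔ M.toFun a = some b) ∨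
      (∀ a, f a = some b ↔ N.toFun a = some b)) : Matching I where
  toFun := f
  quota b := by
    rcases hf b with h | h
    · exact (Finset.card_le_card fun a => by simp [h]).trans (M.quota b)
    · exact (Finset.card_le_card fun a => by simp [h]).trans (N.quota b)

theorem Stable.of_forall_eq_or_eq {M N K : Matching I} (hM : Stable I M) (hN : Stable I N)
    (hK : ∀ a, K.toFun a = M.toFun a ∨ K.toFun a = N.toFun a)
    (hpair : ∀ a b, ¬ BlocksPair I K a b) : Stable I K := by
  refine ⟨fun ⟨a, b, h⟩ => hpair a b h, fun ⟨a, ha⟩ => ?_,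
    fun ⟨b, a, hab, hpref⟩ => ?_⟩
  · rcases hK a with h | h
    · exact hM.not_prefA_none a (h ▸ ha)
    · exact hN.not_prefA_none a (h ▸ ha)
  · rcases hK a with h | h
    · exact hM.2.2 ⟨b, a, h ▸ hab, hpref⟩
    · exact hN.2.2 ⟨b, a, h ▸ hab, hpref⟩

namespace Matching

variable {M N : Matching I}

section OfAgrees

variable {f : A → Option B}
  {hf : ∀ b, (∀ a, f a = some b ↔ M.toFun a = some b) ∨
    (∀ a, f a = some b ↔ N.toFun a = some b)}

theorem assignedTo_ofAgrees (b : B) :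
    assignedTo I (M.ofAgrees N f hf) b = assignedTo I M b ∨
      assignedTo I (M.ofAgrees N f hf) b = assignedTo I N b := by
  rcases hf b with h | h
  · exact Or.inl (Finset.ext fun a => by simp only [mem_assignedTo]; exact h a)
  · exact Or.inr (Finset.ext fun a => by simp only [mem_assignedTo]; exact h a)

theorem hasSlack_ofAgrees_iff (hM : Stable I M) (hN : Stable I N) (b : B) :
    hasSlack I (M.ofAgrees N f hf) b ↔ hasSlack I M b := by
  rcases assignedTo_ofAgrees (hf := hf) b with h | h <;> rw [hasSlack, hasSlack, h]
  rw [card_assignedTo_eq hN hM]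

end OfAgrees

variable (hM : Stable I M) (hN : Stable I N)

def sup : Matching I :=
  M.ofAgrees N (fun a => (M.choices a ⊔ N.choices a : Choice I a)) fun b => by
    rcases forall_lt_ne_some_or_forall_gt_ne_some hM hN b with h | h
    · exact Or.inr (sup_eq_some_iff h)
    · refine Or.inl fun a => ?_
      rw [sup_comm]
      exact sup_eq_some_iff (fun a ha => (h a ha).symm) a

def inf : Matching I :=
  M.ofAgrees N (fun a => (M.choices a ⊓ N.choices a : Choice I a)) fun b => by
    rcases forall_lt_ne_some_or_forall_gt_ne_some hM hN b with h | h
    · exact Or.inl (inf_eq_some_iff h)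
    · refine Or.inr fun a => ?_
      rw [inf_comm]
      exact inf_eq_some_iff (fun a ha => (h a ha).symm) a

theorem inf_comm : inf hM hN = inf hN hM :=
  choices_injective (_root_.inf_comm M.choices N.choices)

theorem assignedTo_sup (b : B) :
    assignedTo I (sup hM hN) b = assignedTo I M b ∨
      assignedTo I (sup hM hN) b = assignedTo I N b :=
  assignedTo_ofAgrees b

theorem hasSlack_inf_iff (b : B) : hasSlack I (inf hM hN) b ↔ hasSlack I M b :=
  hasSlack_ofAgrees_iff hM hN b

theorem stable_sup : Stable I (sup hM hN) := by
  refine hM.of_forall_eq_or_eq hN (fun a => max_choice (M.choices a) (N.choices a))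
    fun a b ⟨hpref, x, hx, hxa⟩ => ?_
  have hM' : I.prefA a (some b) (M.toFun a) :=
    lt_of_le_of_lt (le_sup_left : M.choices a ≤ _) hpref
  have hN' : I.prefA a (some b) (N.toFun a) :=
    lt_of_le_of_lt (le_sup_right : N.choices a ≤ _) hpref
  rcases assignedTo_sup hM hN b with h | h <;> rw [inPartners_congr h] at hx
  · exact asymm hxa (hM.prefB_of_prefA hM' hx)
  · exact asymm hxa (hN.prefB_of_prefA hN' hx)

theorem prefB_of_prefA_inf {a : A} {b : B} (h : I.prefA a (some b) (M.toFun a)) {x : Option A}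
    (hx : inPartners I (inf hM hN) b x) : I.prefB b x (some a) := by
  rcases x with _ | a'
  · rw [inPartners_none, hasSlack_inf_iff] at hx
    exact hM.prefB_of_prefA h (inPartners_none.2 hx)
  rw [inPartners_some] at hx
  rcases le_or_gt (M.choices a') (N.choices a') with hle | hlt
  · have hMa' : M.toFun a' = some b := (inf_of_le_left hle).symm.trans hx
    exact hM.prefB_of_prefA h (inPartners_some.2 hMa')
  have hNa' : N.toFun a' = some b := (inf_of_le_right hlt.le).symm.trans hx
  obtain ⟨y, hy⟩ : ((assignedTo I M b).filter fun a => N.choices a < M.choices a).Nonempty := by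
    rw [← Finset.card_pos, card_filter_assignedTo_lt_eq hM hN]
    exact Finset.card_pos.2 ⟨a', Finset.mem_filter.2 ⟨mem_assignedTo.2 hNa', hlt⟩⟩
  rw [Finset.mem_filter, mem_assignedTo] at hy
  have hNy : I.prefA y (some b) (N.toFun y) := by rw [← hy.1]; exact hy.2
  exact _root_.trans (hN.prefB_of_prefA hNy (inPartners_some.2 hNa'))
    (hM.prefB_of_prefA h (inPartners_some.2 hy.1))

theorem stable_inf : Stable I (inf hM hN) := by
  refine hM.of_forall_eq_or_eq hN (fun a => min_choice (M.choices a) (N.choices a))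
    fun a b ⟨hpref, x, hx, hxa⟩ => ?_
  rcases min_choice (M.choices a) (N.choices a) with h | h
  · rw [show (inf hM hN).toFun a = M.toFun a from h] at hpref
    exact asymm hxa (prefB_of_prefA_inf hM hN hpref hx)
  · rw [show (inf hM hN).toFun a = N.toFun a from h] at hpref
    rw [inf_comm] at hx
    exact asymm hxa (prefB_of_prefA_inf hN hM hpref hx)

end Matching

structure StableMatching (I : SchoolInstance A B) where
  toMatching : Matching I
  stable : Stable I toMatching

namespace StableMatching

instance : Max (StableMatching I) :=
  ⟨fun M N => ⟨Matching.sup M.stable N.stable, Matching.stable_sup M.stable N.stable⟩⟩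

instance : Min (StableMatching I) :=
  ⟨fun M N => ⟨Matching.inf M.stable N.stable, Matching.stable_inf M.stable N.stable⟩⟩

instance : LE (StableMatching I) := ⟨fun M N => M.toMatching.choices ≤ N.toMatching.choices⟩

instance : LT (StableMatching I) := ⟨fun M N => M.toMatching.choices < N.toMatching.choices⟩

theorem choices_injective :
    Function.Injective fun M : StableMatching I => M.toMatching.choices := by
  rintro ⟨M, _⟩ ⟨N, _⟩ h
  cases Matching.choices_injective h
  rfl

instance : DistribLattice (StableMatching I) :=
  choices_injective.distribLattice _ Iff.rfl Iff.rfl (fun _ _ => rfl) (fun _ _ => rfl)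

theorem le_iff_matGE {M N : StableMatching I} : M ≤ N ↔ matGE I N.toMatching M.toMatching :=
  forall_congr' fun _ => or_congr_left eq_comm

theorem lt_iff_matLT {M N : StableMatching I} : M < N ↔ matLT I M.toMatching N.toMatching := by
  rw [lt_iff_le_and_ne, le_iff_matGE, matLT, ← choices_injective.ne_iff]
  rfl

end StableMatching

theorem ImmPred.covBy {M' M : Matching I} (h : ImmPred I M' M) :
    (⟨M', h.1⟩ : StableMatching I) ⋖ ⟨M, h.2.1⟩ :=
  ⟨StableMatching.lt_iff_matLT.2 h.2.2.1, fun Z h₁ h₂ => h.2.2.2 ⟨Z.toMatching, Z.stable,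
    StableMatching.lt_iff_matLT.1 h₁, StableMatching.lt_iff_matLT.1 h₂⟩⟩

theorem ImmPred.lt_of_ne {M' M : Matching I} (h : ImmPred I M' M) {a : A}
    (ha : M.toFun a ≠ M'.toFun a) : M'.choices a < M.choices a :=
  (h.2.2.1.1 a).resolve_left ha

variable [DecidableEq A]

theorem mem_pairsOf_some {Z : Matching I} {a : A} {c : Option B} :
    (some a, c) ∈ pairsOf I Z ↔ c = Z.toFun a := by
  simp [pairsOf]

theorem mem_pairsOf_none {Z : Matching I} {c : Option B} :
    (none, c) ∈ pairsOf I Z ↔ ∃ b, hasSlack I Z b ∧ c = some b := by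
  simp [pairsOf]

theorem mem_rho_fst {M M' : Matching I} (hM : Stable I M) (hM' : Stable I M')
    {p : Option A × Option B} :
    p ∈ (rho I M M').1 ↔ ∃ a, M.toFun a ≠ M'.toFun a ∧ p = (some a, M.toFun a) := by
  rcases p with ⟨_ | a, c⟩
  · simp [rho, mem_pairsOf_none, hasSlack_iff hM hM']
  · simp only [rho, Finset.mem_sdiff, mem_pairsOf_some, Prod.mk.injEq, Option.some_inj]
    constructor
    · rintro ⟨rfl, h⟩; exact ⟨a, h, rfl, rfl⟩
    · rintro ⟨a', h, rfl, rfl⟩; exact ⟨rfl, h⟩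

theorem mem_rho_snd {M M' : Matching I} (hM : Stable I M) (hM' : Stable I M')
    {p : Option A × Option B} :
    p ∈ (rho I M M').2 ↔ ∃ a, M.toFun a ≠ M'.toFun a ∧ p = (some a, M'.toFun a) :=
  (mem_rho_fst hM' hM).trans (exists_congr fun _ => and_congr_left' ne_comm)

theorem rho_eq_of_forall {M M' K X : Matching I} (hM : Stable I M) (hM' : Stable I M')
    (hK : Stable I K) (hX : Stable I X)
    (h : ∀ a, (M.toFun a = K.toFun a ∧ M'.toFun a = X.toFun a) ∨
      (M.toFun a = M'.toFun a ∧ K.toFun a = X.toFun a)) :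
    rho I M M' = rho I K X := by
  refine Prod.ext (Finset.ext fun p => ?_) (Finset.ext fun p => ?_)
  all_goals
    simp only [mem_rho_fst, mem_rho_snd, hM, hM', hK, hX]
    refine exists_congr fun a => ?_
    rcases h a with ⟨h₁, h₂⟩ | ⟨h₁, h₂⟩
    · rw [h₁, h₂]
    · simp [h₁, h₂]

theorem StableMatching.rho_sup_eq (P Q : StableMatching I) :
    rho I (P ⊔ Q).toMatching Q.toMatching = rho I P.toMatching (P ⊓ Q).toMatching := by
  refine rho_eq_of_forall (P ⊔ Q).stable Q.stable P.stable (P ⊓ Q).stable fun a => ?_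
  rcases le_total (P.toMatching.choices a) (Q.toMatching.choices a) with h | h
  · exact Or.inr ⟨(sup_of_le_right h :), (inf_of_le_left h :).symm⟩
  · exact Or.inl ⟨(sup_of_le_left h :), (inf_of_le_right h :).symm⟩

theorem StableMatching.rho_eq_of_covBy {M' M N' N : StableMatching I} (hM : M' ⋖ M)
    (hN : N' ⋖ N) (h : ¬ M ⊓ N ≤ M' ⊔ N') :
    rho I M.toMatching M'.toMatching = rho I N.toMatching N'.toMatching := by
  have hM' : ¬ M ⊓ N ≤ M' := fun h' => h (h'.trans le_sup_left)
  have hN' : ¬ M ⊓ N ≤ N' := fun h' => h (h'.trans le_sup_right)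
  calc rho I M.toMatching M'.toMatching
      = rho I (M ⊓ N ⊔ M').toMatching M'.toMatching := by
        rw [hM.sup_eq_of_le_of_not_le inf_le_left hM']
    _ = rho I (M ⊓ N).toMatching (M ⊓ N ⊓ M').toMatching := rho_sup_eq _ _
    _ = rho I (M ⊓ N).toMatching (M ⊓ N ⊓ N').toMatching := by
        rw [inf_inf_eq_of_covBy_of_not_inf_le_sup hM hN h]
    _ = rho I (M ⊓ N ⊔ N').toMatching N'.toMatching := (rho_sup_eq _ _).symm
    _ = rho I N.toMatching N'.toMatching := by
        rw [hN.sup_eq_of_le_of_not_le inf_le_right hN']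

theorem rho_eq_of_immPred {M' M N' N : Matching I} (hM : ImmPred I M' M) (hN : ImmPred I N' N)
    {a : A} (hMa : M.toFun a ≠ M'.toFun a) (hNa : N.toFun a ≠ N'.toFun a)
    (h : M.toFun a = N.toFun a ∨ M'.toFun a = N'.toFun a) : rho I M M' = rho I N N' := by
  have h₁ := hM.lt_of_ne hMa
  have h₂ := hN.lt_of_ne hNa
  refine StableMatching.rho_eq_of_covBy hM.covBy hN.covBy fun hle => (hle a).not_gt ?_
  rcases h with h | h
  · replace h : M.choices a = N.choices a := h
    exact max_lt (lt_min h₁ (h₁.trans_eq h)) (lt_min (h₂.trans_eq h.symm) h₂)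
  · replace h : M'.choices a = N'.choices a := h
    exact max_lt (lt_min h₁ (h.trans_lt h₂)) (lt_min (h.symm.trans_lt h₁) h₂)

end SM

namespace SM

variable {A B : Type} [Fintype A] [Fintype B] [DecidableEq A] [DecidableEq B]

/-- all-or-nothing property. -/
theorem stmt14 (I : SchoolInstance A B) (r r' : Rot A B)
    (hr : r ∈ RotSet I) (hr' : r' ∈ RotSet I) (hne : r ≠ r') :
    r.1 ∩ r'.1 = ∅ ∧ r.2 ∩ r'.2 = ∅ := by
  obtain ⟨M, M', hM, rfl⟩ := hr
  obtain ⟨N, N', hN, rfl⟩ := hr'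
  refine ⟨Finset.eq_empty_of_forall_notMem fun p hp => ?_,
    Finset.eq_empty_of_forall_notMem fun p hp => ?_⟩ <;> rw [Finset.mem_inter] at hp
  · obtain ⟨a, hMa, rfl⟩ := (mem_rho_fst hM.2.1 hM.1).1 hp.1
    obtain ⟨_, hNa, he⟩ := (mem_rho_fst hN.2.1 hN.1).1 hp.2
    simp only [Prod.mk.injEq, Option.some_inj] at he
    obtain ⟨rfl, hMN⟩ := he
    exact hne (rho_eq_of_immPred hM hN hMa hNa (Or.inl hMN))
  · obtain ⟨a, hMa, rfl⟩ := (mem_rho_snd hM.2.1 hM.1).1 hp.1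
    obtain ⟨_, hNa, he⟩ := (mem_rho_snd hN.2.1 hN.1).1 hp.2
    simp only [Prod.mk.injEq, Option.some_inj] at he
    obtain ⟨rfl, hMN⟩ := he
    exact hne (rho_eq_of_immPred hM hN hMa hNa (Or.inr hMN))

end SM
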